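/- Assume the sign-coherence of C-matrices: for every skew-symmetrizable initial integer matrix and every path, the associated C-matrix is column sign-coherent. Let B be a skew-symmetrizable n×n integer matrix, let t be a vertex reached from t_0 by the path (i_1,…,i_m), let k ∈ {1,…,n}, set B_1 = μ_k(B) assigned to the vertex t_1 adjacent to t_0 via the edge labeled k, and let C^{B_1;t_1}_t and G^{B_1;t_1}_t be the C- and G-matrices with initial matrix B_1 along the path (k,i_1,…,i_m) from t_1 to t. Then the k-th row of G^{B;t_0}_t is sign-coherent with row sign ε_{k•}(G^{B;t_0}_t), and the reduced initial-seed mutation formulas hold: C^{B_1;t_1}_t = (J_k + [−ε_{k•}(G^{B;t_0}_t) B]^{k•}_+) C^{B;t_0}_t and G^{B_1;t_1}_t = (J_k + [ε_{k•}(G^{B;t_0}_t) B]^{•k}_+) G^{B;t_0}_t. -/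

import Mathlib

open Matrix

section Defs

variable {ι : Type} [Fintype ι] [DecidableEq ι]
variable {R : Type} [CommRing R] [LinearOrder R] [IsStrictOrderedRing R]

/-- Entrywise positive part `[A]₊`. -/
def matPos (A : Matrix ι ι R) : Matrix ι ι R := fun i j => max (A i j) 0

/-- `A^{k•}`: the matrix keeping only the `k`-th row of `A`. -/
def rowSel (k : ι) (A : Matrix ι ι R) : Matrix ι ι R := fun i j => if i = k then A i j else 0

/-- `A^{•k}`: the matrix keeping only the `k`-th column of `A`. -/
def colSel (k : ι) (A : Matrix ι ι R) : Matrix ι ι R := fun i j => if j = k then A i j else 0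

/-- Entrywise maximum of two matrices. -/
def emax (A B : Matrix ι ι R) : Matrix ι ι R := fun i j => max (A i j) (B i j)

/-- `J_ℓ`: identity matrix with `(ℓ,ℓ)` entry replaced by `-1`. -/
def Jmat (ℓ : ι) : Matrix ι ι R := Matrix.diagonal fun i => if i = ℓ then -1 else 1

/-- Matrix mutation `μ_k(B)` in direction `k`. -/
def mutate (B : Matrix ι ι R) (k : ι) : Matrix ι ι R := fun i j =>
  if i = k ∨ j = k then -(B i j)
  else B i j + max (B i k) 0 * B k j + B i k * max (-(B k j)) 0

/-- The data `(B_t, C_t, G_t, F_t)` attached to a vertex. -/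
structure SeedData (ι R : Type) where
  B : Matrix ι ι R
  C : Matrix ι ι R
  G : Matrix ι ι R
  F : Matrix ι ι R

/-- One final-seed mutation step in direction `ℓ` (with initial exchange matrix `B0`). -/
def seedStep (B0 : Matrix ι ι R) (s : SeedData ι R) (ℓ : ι) : SeedData ι R where
  B := mutate s.B ℓ
  C := s.C * (Jmat ℓ + rowSel ℓ (matPos s.B)) + colSel ℓ (matPos (-s.C)) * s.B
  G := s.G * (Jmat ℓ + colSel ℓ (matPos s.B)) - B0 * colSel ℓ (matPos s.C)
  F := s.F * Jmat ℓ + emax (colSel ℓ (matPos s.C) + s.F * colSel ℓ (matPos s.B))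
      (colSel ℓ (matPos (-s.C)) + s.F * colSel ℓ (matPos (-s.B)))

/-- The seed data at the endpoint of the path `p` starting from the initial vertex. -/
def seedOf (B0 : Matrix ι ι R) (p : List ι) : SeedData ι R :=
  p.foldl (seedStep B0) ⟨B0, 1, 1, 0⟩

/-- The exchange matrix `B_t` at the end of the path `p`. -/
def Bpath (B : Matrix ι ι R) (p : List ι) : Matrix ι ι R := (seedOf B p).B

/-- The `C`-matrix `C^{B;t_0}_t` at the end of the path `p`. -/
def Cmat (B : Matrix ι ι R) (p : List ι) : Matrix ι ι R := (seedOf B p).C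

/-- The `G`-matrix `G^{B;t_0}_t` at the end of the path `p`. -/
def Gmat (B : Matrix ι ι R) (p : List ι) : Matrix ι ι R := (seedOf B p).G

/-- The `F`-matrix `F^{B;t_0}_t` at the end of the path `p`. -/
def Fmat (B : Matrix ι ι R) (p : List ι) : Matrix ι ι R := (seedOf B p).F

/-- `B` is skew-symmetrizable: `DB` is skew-symmetric for some positive diagonal `D`. -/
def IsSkewSymmetrizable (B : Matrix ι ι ℤ) : Prop :=
  ∃ d : ι → ℤ, (∀ i, 0 < d i) ∧ (Matrix.diagonal d * B)ᵀ = -(Matrix.diagonal d * B)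

/-- Column sign-coherence: every column is nonzero and has all entries of one sign. -/
def ColSignCoherent (A : Matrix ι ι ℤ) : Prop :=
  ∀ j, (∃ i, A i j ≠ 0) ∧ ((∀ i, 0 ≤ A i j) ∨ (∀ i, A i j ≤ 0))

/-- Row sign-coherence: every row is nonzero and has all entries of one sign. -/
def RowSignCoherent (A : Matrix ι ι ℤ) : Prop :=
  ∀ i, (∃ j, A i j ≠ 0) ∧ ((∀ j, 0 ≤ A i j) ∨ (∀ j, A i j ≤ 0))

/-- `ε` is the column sign `ε_{•ℓ}(A)` of the (sign-coherent, nonzero) `ℓ`-th column of `A`. -/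
def IsColSign (ε : ℤ) (A : Matrix ι ι ℤ) (ℓ : ι) : Prop :=
  (ε = 1 ∨ ε = -1) ∧ (∃ i, A i ℓ ≠ 0) ∧ ∀ i, 0 ≤ ε * A i ℓ

/-- `ε` is the row sign `ε_{k•}(A)` of the (sign-coherent, nonzero) `k`-th row of `A`. -/
def IsRowSign (ε : ℤ) (A : Matrix ι ι ℤ) (k : ι) : Prop :=
  (ε = 1 ∨ ε = -1) ∧ (∃ j, A k j ≠ 0) ∧ ∀ j, 0 ≤ ε * A k j

/-- Sign-coherence of `C`-matrices: for every skew-symmetrizable initial integer matrix and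
every path, the associated `C`-matrix is column sign-coherent. -/
def SignCoherenceOfC : Prop :=
  ∀ (κ : Type) [Fintype κ] [DecidableEq κ], ∀ B : Matrix κ κ ℤ,
    IsSkewSymmetrizable B → ∀ p : List κ, ColSignCoherent (Cmat B p)

/-- The principal extension `B̄ = [[B, -I],[I, O]]` of `B`, on the index type `Fin n ⊕ Fin n`. -/
def pext {n : ℕ} (B : Matrix (Fin n) (Fin n) ℤ) :
    Matrix (Fin n ⊕ Fin n) (Fin n ⊕ Fin n) ℤ :=
  Matrix.fromBlocks B (-1) 1 0

noncomputable section FPolys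

/-- The ambient field of rational functions `ℚ(y_i : i ∈ ι)` (fraction field of `ℤ[y_i]`). -/
abbrev FField (ι : Type) := FractionRing (MvPolynomial ι ℤ)

/-- The variable `y_i` inside the fraction field. -/
def yvar (i : ι) : FField ι := algebraMap (MvPolynomial ι ℤ) (FField ι) (MvPolynomial.X i)

/-- One mutation step for the triple `(B_t, C_t, (F_{j;t})_j)`. -/
def fpolyStep (s : Matrix ι ι ℤ × Matrix ι ι ℤ × (ι → FField ι)) (ℓ : ι) :
    Matrix ι ι ℤ × Matrix ι ι ℤ × (ι → FField ι) :=
  ⟨mutate s.1 ℓ,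
   s.2.1 * (Jmat ℓ + rowSel ℓ (matPos s.1)) + colSel ℓ (matPos (-s.2.1)) * s.1,
   fun j => if j = ℓ then
     (s.2.2 ℓ)⁻¹ *
       ((∏ i, yvar i ^ (max (s.2.1 i ℓ) 0).toNat) * (∏ i, s.2.2 i ^ (max (s.1 i ℓ) 0).toNat)
        + (∏ i, yvar i ^ (max (-(s.2.1 i ℓ)) 0).toNat) *
            (∏ i, s.2.2 i ^ (max (-(s.1 i ℓ)) 0).toNat))
   else s.2.2 j⟩

/-- The `F`-polynomial `F^{B;t_0}_{j;t}` (as an element of the field of rational functions)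
at the end of the path `p`. -/
def Fpoly (B : Matrix ι ι ℤ) (p : List ι) : ι → FField ι :=
  (p.foldl fpolyStep ⟨B, 1, fun _ => 1⟩).2.2

/-- The polynomial representing an element of the fraction field (when it is a polynomial). -/
def polyOf (x : FField ι) : MvPolynomial ι ℤ := by
  classical exact
    if h : ∃ q : MvPolynomial ι ℤ, algebraMap (MvPolynomial ι ℤ) (FField ι) q = x then
      h.choose else 0

/-- The `H`-matrix `H^{B;t_0}_t`: `h_{ij;t}` is the minimum over exponent vectors `a` in the
support of `F^{B;t_0}_{j;t}` of `-a_i + ∑_{l ≠ i} [-b_{il}]₊ a_l`. -/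
def Hmat (B : Matrix ι ι ℤ) (p : List ι) : Matrix ι ι ℤ := fun i j =>
  if h : (polyOf (Fpoly B p j)).support.Nonempty then
    (polyOf (Fpoly B p j)).support.inf' h
      (fun a => -(a i : ℤ) + ∑ l ∈ Finset.univ.erase i, max (-(B i l)) 0 * (a l : ℤ))
  else 0

end FPolys

/-- The embedding `ℚ(y_1,…,y_n) → ℚ(y_1,…,y_{2n})` sending `y_i` to `y_i`
(the second batch of variables indexed by the right summand). -/
noncomputable def embK (n : ℕ) : FField (Fin n) →+* FField (Fin n ⊕ Fin n) :=
  IsFractionRing.lift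
    (g := (algebraMap (MvPolynomial (Fin n ⊕ Fin n) ℤ) (FField (Fin n ⊕ Fin n))).comp
      (MvPolynomial.rename (Sum.inl : Fin n → Fin n ⊕ Fin n)).toRingHom)
    (by
      intro a b hab
      simp only [RingHom.coe_comp, Function.comp_apply, AlgHom.toRingHom_eq_coe,
        RingHom.coe_coe] at hab
      exact MvPolynomial.rename_injective _ Sum.inl_injective
        (IsFractionRing.injective (MvPolynomial (Fin n ⊕ Fin n) ℤ)
          (FField (Fin n ⊕ Fin n)) hab))

/-- `D⁻¹ Cᵀ D` over `ℚ`, for the positive diagonal skew-symmetrizer `D = diagonal d`. -/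
noncomputable def dCd {n : ℕ} (d : Fin n → ℤ) (C : Matrix (Fin n) (Fin n) ℤ) :
    Matrix (Fin n) (Fin n) ℚ :=
  (Matrix.diagonal fun i => (d i : ℚ))⁻¹ * (C.map (Int.cast : ℤ → ℚ))ᵀ *
    Matrix.diagonal fun i => (d i : ℚ)

end Defs

/-!
Sign-coherence turns the final-seed recursions into `C_{t'} = C_t (J_ℓ + [σ B_t]^{ℓ•}_+)` and
`G_{t'} = G_t (J_ℓ + [-σ B_t]^{•ℓ}_+)`, where `σ` is the sign of the `ℓ`-th column of `C_t`. These
factors are involutions intertwined by `D`, which gives the duality `C_tᵀ D G_t = D` and, provided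
the initial-seed formulas hold for shorter paths, `D C^{-B_t;t}_{t_0} = G_tᵀ D` along the reversed
path; so the rows of `G_t` inherit sign-coherence from the columns of a `C`-matrix.

The initial-seed formulas are then proved by induction on the path. When `ℓ` is appended, the
`ℓ`-th columns of `C^{B;t_0}_t` and `C^{B_1;t_1}_t` have the same sign and the formulas propagate,
unless the `k`-th row of `G_t` is supported on `ℓ`. In that case duality and `det C_t = ±1` force
that row to be `ε e_ℓ` and the `ℓ`-th column of `C_t` to be `ε e_k`; the sign `ε` flips, and the
formulas survive by a direct computation.
-/

open Matrix

section SelectionMatrices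

variable {ι : Type} [Fintype ι] [DecidableEq ι] {R : Type} [CommRing R]

lemma Jmat_mul_apply (l : ι) (A : Matrix ι ι R) (i j : ι) :
    ((Jmat l : Matrix ι ι R) * A) i j = if i = l then -A i j else A i j := by
  rw [Jmat, diagonal_mul]
  split_ifs <;> simp

lemma mul_Jmat_apply (l : ι) (A : Matrix ι ι R) (i j : ι) :
    (A * (Jmat l : Matrix ι ι R)) i j = if j = l then -A i j else A i j := by
  rw [Jmat, mul_diagonal]
  split_ifs <;> simp

lemma mul_rowSel_apply (A U : Matrix ι ι R) (l i j : ι) :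
    (A * rowSel l U) i j = A i l * U l j := by
  simp [mul_apply, rowSel]

lemma colSel_mul_apply (U A : Matrix ι ι R) (l i j : ι) :
    (colSel l U * A) i j = U i l * A l j := by
  simp [mul_apply, colSel]

lemma mul_colSel (A U : Matrix ι ι R) (l : ι) : A * colSel l U = colSel l (A * U) := by
  ext i j
  by_cases hj : j = l <;> simp [mul_apply, colSel, hj]

end SelectionMatrices

section MutationMatrices

variable {ι : Type} [DecidableEq ι] {R : Type} [CommRing R] [LinearOrder R]

def mutE (σ : R) (l : ι) (M : Matrix ι ι R) : Matrix ι ι R :=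
  Jmat l + rowSel l (matPos (σ • M))

def mutF (σ : R) (l : ι) (M : Matrix ι ι R) : Matrix ι ι R :=
  Jmat l + colSel l (matPos (σ • M))

lemma mutE_transpose (σ : R) (l : ι) (M : Matrix ι ι R) :
    (mutE σ l M)ᵀ = mutF σ l Mᵀ := by
  rw [mutE, mutF, transpose_add, Jmat, diagonal_transpose, ← transpose_smul]
  rfl

lemma mutF_transpose (σ : R) (l : ι) (M : Matrix ι ι R) :
    (mutF σ l M)ᵀ = mutE σ l Mᵀ := by
  rw [← transpose_transpose (mutE σ l Mᵀ), mutE_transpose, transpose_transpose]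

lemma mutE_neg (σ : R) (l : ι) (M : Matrix ι ι R) : mutE σ l (-M) = mutE (-σ) l M := by
  rw [mutE, mutE, smul_neg, neg_smul]

lemma mutF_neg (σ : R) (l : ι) (M : Matrix ι ι R) : mutF σ l (-M) = mutF (-σ) l M := by
  rw [mutF, mutF, smul_neg, neg_smul]

lemma mutE_apply (σ : R) (l : ι) (M : Matrix ι ι R) (i j : ι) :
    mutE σ l M i j = (if i = j then (if i = l then -1 else 1) else 0)
      + if i = l then max (σ * M l j) 0 else 0 := by
  simp only [mutE, Jmat, Matrix.add_apply, diagonal_apply, rowSel, matPos, Matrix.smul_apply,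
    smul_eq_mul]
  split_ifs <;> simp_all

lemma colSel_matPos_of_nonneg {A : Matrix ι ι R} {l : ι} (h : ∀ i, 0 ≤ A i l) :
    colSel l (matPos A) = colSel l A := by
  ext i j
  by_cases hj : j = l
  · simp [colSel, matPos, hj, h i]
  · simp [colSel, hj]

lemma colSel_matPos_of_nonpos {A : Matrix ι ι R} {l : ι} (h : ∀ i, A i l ≤ 0) :
    colSel l (matPos A) = 0 := by
  ext i j
  by_cases hj : j = l
  · simp [colSel, matPos, hj, h i]
  · simp [colSel, hj]

lemma mutF_one_sub_colSel [IsOrderedRing R] (l : ι) (b : Matrix ι ι R) :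
    mutF 1 l b - colSel l b = mutF (-1) l b := by
  ext i j
  by_cases hj : j = l
  · simp only [mutF, Matrix.sub_apply, Matrix.add_apply, colSel, matPos, Matrix.smul_apply,
      smul_eq_mul, hj, if_true, one_mul, neg_one_mul]
    linear_combination max_zero_sub_eq_self (b i l)
  · simp [mutF, colSel, hj]

variable [Fintype ι]

lemma mul_mutE_apply (A : Matrix ι ι R) {M : Matrix ι ι R} {l : ι} (hM : M l l = 0) (σ : R)
    (i j : ι) : (A * mutE σ l M) i j =
      if j = l then -A i l else A i j + A i l * max (σ * M l j) 0 := by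
  rw [mutE, Matrix.mul_add, Matrix.add_apply, mul_rowSel_apply, mul_Jmat_apply]
  split_ifs with h
  · simp [h, matPos, hM]
  · rfl

lemma mutE_mul_apply (σ : R) (k : ι) (M A : Matrix ι ι R) (i j : ι) :
    (mutE σ k M * A) i j =
      if i = k then -A k j + ∑ m, max (σ * M k m) 0 * A m j else A i j := by
  rw [mutE, Matrix.add_mul, Matrix.add_apply, Jmat_mul_apply]
  split_ifs with h
  · simp [h, mul_apply, rowSel, matPos]
  · simp [h, mul_apply, rowSel]

lemma mul_mutF_apply (A : Matrix ι ι R) (σ : R) (l : ι) (M : Matrix ι ι R) (i j : ι) :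
    (A * mutF σ l M) i j =
      if j = l then -A i l + ∑ m, A i m * max (σ * M m l) 0 else A i j := by
  rw [← transpose_apply (A * mutF σ l M), transpose_mul, mutF_transpose, mutE_mul_apply]
  simp [mul_comm]

lemma mutF_mul_apply {M : Matrix ι ι R} {k : ι} (hM : M k k = 0) (σ : R) (A : Matrix ι ι R)
    (i j : ι) : (mutF σ k M * A) i j =
      if i = k then -A k j else A i j + max (σ * M i k) 0 * A k j := by
  rw [← transpose_apply (mutF σ k M * A), transpose_mul, mutF_transpose,
    mul_mutE_apply _ (M := Mᵀ) hM]
  simp [mul_comm]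

lemma mutE_mul_self {M : Matrix ι ι R} {l : ι} (hM : M l l = 0) (σ : R) :
    mutE σ l M * mutE σ l M = 1 := by
  ext i j
  rw [mul_mutE_apply _ hM, mutE_apply, mutE_apply, one_apply]
  by_cases hj : j = l <;> by_cases hi : i = l <;> by_cases hij : i = j <;> simp_all

lemma mutF_mul_self {M : Matrix ι ι R} {l : ι} (hM : M l l = 0) (σ : R) :
    mutF σ l M * mutF σ l M = 1 := by
  rw [← transpose_transpose (mutF σ l M * _), transpose_mul, mutF_transpose,
    mutE_mul_self (M := Mᵀ) hM, transpose_one]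

lemma colSel_mul_mutF {b : Matrix ι ι R} {l : ι} (hb : b l l = 0) (U : Matrix ι ι R) (σ : R) :
    colSel l U * mutF σ l b = -colSel l U := by
  ext i j
  rw [mul_mutF_apply]
  by_cases hj : j = l <;> simp [colSel, hj, hb]

lemma mul_mutE_of_col_eq_zero {b X : Matrix ι ι R} {l : ι} (hb : b l l = 0)
    (hX : ∀ i, X i l = 0) (σ : R) : X * mutE σ l b = X := by
  ext i j
  rw [mul_mutE_apply _ hb]
  by_cases hj : j = l <;> simp [hj, hX]

end MutationMatrices

section Mutation

variable {ι : Type} [DecidableEq ι] {R : Type} [CommRing R] [LinearOrder R]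

lemma mutate_apply_of_eq (B : Matrix ι ι R) {i j k : ι} (h : i = k ∨ j = k) :
    mutate B k i j = -B i j := if_pos h

lemma mutate_apply_of_ne (B : Matrix ι ι R) {i j k : ι} (hi : i ≠ k) (hj : j ≠ k) :
    mutate B k i j = B i j + max (B i k) 0 * B k j + B i k * max (-B k j) 0 :=
  if_neg (by tauto)

lemma mutE_mutate (σ : R) (k : ι) (B : Matrix ι ι R) :
    mutE σ k (mutate B k) = mutE (-σ) k B := by
  ext i j
  simp only [mutE_apply, mutate_apply_of_eq B (Or.inl rfl), mul_neg, neg_mul]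

lemma mutF_mutate (σ : R) (k : ι) (B : Matrix ι ι R) :
    mutF σ k (mutate B k) = mutF (-σ) k B := by
  rw [← transpose_transpose (mutF σ k _), mutF_transpose,
    ← transpose_transpose (mutF (-σ) k B), mutF_transpose]
  congr 1
  ext i j
  simp only [mutE_apply, transpose_apply, mutate_apply_of_eq B (Or.inr rfl), mul_neg, neg_mul]

lemma mutate_eq_mutF_mul_mul_mutE [Fintype ι] {B : Matrix ι ι R} {k : ι} (hB : B k k = 0) :
    mutate B k = mutF 1 k B * B * mutE (-1) k B := by
  ext i j
  rw [mul_mutE_apply _ hB, mutF_mul_apply hB, mutF_mul_apply hB]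
  by_cases hj : j = k <;> by_cases hi : i = k
  all_goals simp only [hi, hj, ↓reduceIte, mutate_apply_of_eq, mutate_apply_of_ne, hB, ne_eq,
    not_false_eq_true, true_or, or_true, one_mul, neg_mul, mul_zero, add_zero, neg_zero,
    zero_mul]

variable [IsOrderedRing R]

lemma mutate_mutate (B : Matrix ι ι R) (k : ι) : mutate (mutate B k) k = B := by
  ext i j
  by_cases h : i = k ∨ j = k
  · rw [mutate_apply_of_eq _ h, mutate_apply_of_eq _ h, neg_neg]
  · obtain ⟨hi, hj⟩ := not_or.mp h
    rw [mutate_apply_of_ne _ hi hj, mutate_apply_of_ne _ hi hj,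
      mutate_apply_of_eq B (Or.inr rfl), mutate_apply_of_eq B (Or.inl rfl), neg_neg]
    linear_combination B k j * max_zero_sub_eq_self (B i k) - B i k * max_zero_sub_eq_self (B k j)

lemma mutate_neg (B : Matrix ι ι R) (k : ι) : mutate (-B) k = -mutate B k := by
  ext i j
  rw [Matrix.neg_apply]
  by_cases h : i = k ∨ j = k
  · rw [mutate_apply_of_eq _ h, mutate_apply_of_eq _ h, Matrix.neg_apply]
  · obtain ⟨hi, hj⟩ := not_or.mp h
    simp only [mutate_apply_of_ne _ hi hj, Matrix.neg_apply, neg_neg]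
    linear_combination B k j * max_zero_sub_eq_self (B i k) - B i k * max_zero_sub_eq_self (B k j)

end Mutation

section SkewSymmetrizer

variable {ι : Type} {R : Type} [CommRing R] [LinearOrder R]

structure IsSkewSymmetrizer (d : ι → R) (B : Matrix ι ι R) : Prop where
  pos : ∀ i, 0 < d i
  skew : ∀ i j, d i * B i j = -(d j * B j i)

lemma isSkewSymmetrizable_iff [Fintype ι] [DecidableEq ι] {B : Matrix ι ι ℤ} :
    IsSkewSymmetrizable B ↔ ∃ d, IsSkewSymmetrizer d B := by
  constructor
  · rintro ⟨d, hd, h⟩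
    refine ⟨d, hd, fun i j => ?_⟩
    simpa [diagonal_mul] using congrFun (congrFun h j) i
  · rintro ⟨d, hd, h⟩
    exact ⟨d, hd, by ext i j; simp [diagonal_mul, h j i]⟩

lemma mul_max_zero_eq_mul_max_zero [IsOrderedRing R] {a b x y : R} (ha : 0 ≤ a) (hb : 0 ≤ b)
    (h : a * x = b * y) : a * max x 0 = b * max y 0 := by
  rw [mul_max_of_nonneg _ _ ha, mul_max_of_nonneg _ _ hb, h, mul_zero, mul_zero]

namespace IsSkewSymmetrizer

variable {d : ι → R} {B : Matrix ι ι R}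

lemma neg (hB : IsSkewSymmetrizer d B) : IsSkewSymmetrizer d (-B) :=
  ⟨hB.pos, fun i j => by simp only [Matrix.neg_apply, mul_neg, hB.skew i j]⟩

variable [IsStrictOrderedRing R]

lemma apply_self (hB : IsSkewSymmetrizer d B) (i : ι) : B i i = 0 := by
  have h : d i * B i i = 0 := by linarith [hB.skew i i]
  exact (mul_eq_zero.mp h).resolve_left (hB.pos i).ne'

variable [DecidableEq ι]

lemma mutate (hB : IsSkewSymmetrizer d B) (k : ι) : IsSkewSymmetrizer d (mutate B k) := by
  refine ⟨hB.pos, fun i j => ?_⟩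
  by_cases h : i = k ∨ j = k
  · rw [mutate_apply_of_eq _ h, mutate_apply_of_eq _ h.symm, mul_neg, mul_neg, hB.skew i j]
  obtain ⟨hi, hj⟩ := not_or.mp h
  rw [mutate_apply_of_ne _ hi hj, mutate_apply_of_ne _ hj hi]
  have e_i : d i * max (B i k) 0 = d k * max (-B k i) 0 :=
    mul_max_zero_eq_mul_max_zero (hB.pos i).le (hB.pos k).le (by linarith [hB.skew i k])
  have e_j : d j * max (B j k) 0 = d k * max (-B k j) 0 :=
    mul_max_zero_eq_mul_max_zero (hB.pos j).le (hB.pos k).le (by linarith [hB.skew j k])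
  linear_combination hB.skew i j + B k j * e_i + max (-B k j) 0 * hB.skew i k + B k i * e_j
    + max (-B k i) 0 * hB.skew j k

variable [Fintype ι]

lemma diagonal_mul_mutE (hB : IsSkewSymmetrizer d B) (σ : R) (l : ι) :
    diagonal d * mutE σ l B = mutE (-σ) l Bᵀ * diagonal d := by
  ext i j
  rw [diagonal_mul, mul_diagonal, mutE_apply, mutE_apply, transpose_apply]
  by_cases hi : i = l <;> by_cases hij : i = j
  · subst hi hij
    simp [hB.apply_self]
  · subst hi
    simp only [if_neg hij, if_true, zero_add]
    exact mul_max_zero_eq_mul_max_zero (hB.pos i).le (hB.pos j).le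
      (by linear_combination σ * hB.skew i j) |>.trans (mul_comm _ _)
  · subst hij
    simp [hi]
  · simp [hi, hij]

lemma mutF_mul_diagonal (hB : IsSkewSymmetrizer d B) (σ : R) (l : ι) :
    mutF σ l Bᵀ * diagonal d = diagonal d * mutF (-σ) l B := by
  have h := congrArg transpose (hB.diagonal_mul_mutE σ l)
  rwa [transpose_mul, transpose_mul, mutE_transpose, mutE_transpose, diagonal_transpose,
    transpose_transpose] at h

end IsSkewSymmetrizer

end SkewSymmetrizer

section Paths

variable {ι : Type} [Fintype ι] [DecidableEq ι] {R : Type} [CommRing R] [LinearOrder R]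

@[simp] lemma Bpath_nil (B : Matrix ι ι R) : Bpath B [] = B := rfl

@[simp] lemma Cmat_nil (B : Matrix ι ι R) : Cmat B [] = 1 := rfl

@[simp] lemma Gmat_nil (B : Matrix ι ι R) : Gmat B [] = 1 := rfl

lemma seedOf_append (B : Matrix ι ι R) (p : List ι) (l : ι) :
    seedOf B (p ++ [l]) = seedStep B (seedOf B p) l :=
  List.foldl_concat ..

lemma Bpath_append (B : Matrix ι ι R) (p : List ι) (l : ι) :
    Bpath B (p ++ [l]) = mutate (Bpath B p) l := by
  rw [Bpath, seedOf_append]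
  rfl

lemma Cmat_append (B : Matrix ι ι R) (p : List ι) (l : ι) :
    Cmat B (p ++ [l]) =
      Cmat B p * mutE 1 l (Bpath B p) + colSel l (matPos (-Cmat B p)) * Bpath B p := by
  rw [Cmat, seedOf_append, mutE, one_smul]
  rfl

lemma Gmat_append (B : Matrix ι ι R) (p : List ι) (l : ι) :
    Gmat B (p ++ [l]) = Gmat B p * mutF 1 l (Bpath B p) - B * colSel l (matPos (Cmat B p)) := by
  rw [Gmat, seedOf_append, mutF, one_smul]
  rfl

lemma Bpath_eq_foldl (B : Matrix ι ι R) (p : List ι) : Bpath B p = p.foldl mutate B := by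
  suffices ∀ s : SeedData ι R, (p.foldl (seedStep B) s).B = p.foldl mutate s.B from this _
  induction p with
  | nil => exact fun _ => rfl
  | cons a q ih => exact fun s => ih (seedStep B s a)

lemma Bpath_cons (B : Matrix ι ι R) (k : ι) (p : List ι) :
    Bpath B (k :: p) = Bpath (mutate B k) p := by
  rw [Bpath_eq_foldl, Bpath_eq_foldl, List.foldl_cons]

lemma Bpath_mutate_cons [IsOrderedRing R] (B : Matrix ι ι R) (k : ι) (p : List ι) :
    Bpath (mutate B k) (k :: p) = Bpath B p := by
  rw [Bpath_cons, mutate_mutate]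

lemma IsSkewSymmetrizer.Bpath [IsStrictOrderedRing R] {d : ι → R} {B : Matrix ι ι R}
    (hB : IsSkewSymmetrizer d B) (p : List ι) : IsSkewSymmetrizer d (Bpath B p) := by
  induction p using List.reverseRecOn with
  | nil => exact hB
  | append_singleton q l ih => rw [Bpath_append]; exact ih.mutate l

end Paths

section FinalSeedMutation

variable {ι : Type} [Fintype ι] [DecidableEq ι] {R : Type} [CommRing R] [LinearOrder R]
  [IsStrictOrderedRing R]

lemma mul_mutE_neg_one_add {b : Matrix ι ι R} {l : ι} (hb : b l l = 0) (C : Matrix ι ι R) :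
    C * mutE (-1) l b + colSel l (matPos C) * b =
      C * mutE 1 l b + colSel l (matPos (-C)) * b := by
  ext i j
  simp only [Matrix.add_apply, colSel_mul_apply, mul_mutE_apply _ hb, matPos, Matrix.neg_apply,
    one_mul, neg_one_mul]
  split_ifs with hj
  · rw [hj, hb]
    ring
  · linear_combination b l j * max_zero_sub_eq_self (C i l) - C i l * max_zero_sub_eq_self (b l j)

lemma Gmat_mul_Bpath {d : ι → R} {B : Matrix ι ι R} (hB : IsSkewSymmetrizer d B)
    (p : List ι) : Gmat B p * Bpath B p = B * Cmat B p := by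
  induction p using List.reverseRecOn with
  | nil => simp
  | append_singleton q l ih =>
    set b := Bpath B q
    have hb : b l l = 0 := (hB.Bpath q).apply_self l
    set S := colSel l (matPos (Cmat B q))
    have hFF := mutF_mul_self hb (1 : R)
    have hS : S * mutF 1 l b = -S := colSel_mul_mutF hb _ _
    have hSb : ∀ i, (S * b) i l = 0 := fun i => by rw [colSel_mul_apply, hb, mul_zero]
    rw [Gmat_append, Bpath_append, Cmat_append, mutate_eq_mutF_mul_mul_mutE hb,
      ← mul_mutE_neg_one_add hb]
    calc (Gmat B q * mutF 1 l b - B * S) * (mutF 1 l b * b * mutE (-1) l b)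
        = Gmat B q * (mutF 1 l b * mutF 1 l b) * b * mutE (-1) l b
          - B * (S * mutF 1 l b) * b * mutE (-1) l b := by
          simp only [Matrix.sub_mul, Matrix.mul_assoc]
      _ = B * Cmat B q * mutE (-1) l b + B * (S * b * mutE (-1) l b) := by
          rw [hFF, Matrix.mul_one, ih, hS]
          simp only [Matrix.mul_neg, Matrix.neg_mul, sub_neg_eq_add, Matrix.mul_assoc]
      _ = B * (Cmat B q * mutE (-1) l b + S * b) := by
          rw [mul_mutE_of_col_eq_zero hb hSb, Matrix.mul_add, Matrix.mul_assoc]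

end FinalSeedMutation

section Signs

variable {ι : Type} {A : Matrix ι ι ℤ}

lemma sign_eq_of_mul_nonneg {σ τ x : ℤ} (hσ : σ = 1 ∨ σ = -1) (hτ : τ = 1 ∨ τ = -1)
    (hx : x ≠ 0) (hσx : 0 ≤ σ * x) (hτx : 0 ≤ τ * x) : σ = τ := by
  rcases hσ with rfl | rfl <;> rcases hτ with rfl | rfl <;> omega

lemma eq_sign_of_isUnit {σ x : ℤ} (hσ : σ = 1 ∨ σ = -1) (hx : IsUnit x) (h : 0 ≤ σ * x) :
    x = σ := by
  rcases Int.isUnit_iff.mp hx with rfl | rfl <;> rcases hσ with rfl | rfl <;> omega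

lemma ColSignCoherent.exists_isColSign (h : ColSignCoherent A) (l : ι) :
    ∃ σ, IsColSign σ A l := by
  obtain ⟨hne, hpos | hneg⟩ := h l
  · exact ⟨1, Or.inl rfl, hne, fun i => by simpa using hpos i⟩
  · exact ⟨-1, Or.inr rfl, hne, fun i => by simpa using hneg i⟩

variable [DecidableEq ι] {ε : ℤ} {k l : ι}

lemma isColSign_of_col_eq (hε : ε = 1 ∨ ε = -1) (h : ∀ i, A i l = if i = k then ε else 0) :
    IsColSign ε A l := by
  refine ⟨hε, ⟨k, by rcases hε with rfl | rfl <;> simp [h]⟩, fun i => ?_⟩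
  rw [h]
  split_ifs <;> rcases hε with rfl | rfl <;> norm_num

lemma isRowSign_of_row_eq (hε : ε = 1 ∨ ε = -1) (h : ∀ j, A k j = if j = l then ε else 0) :
    IsRowSign ε A k :=
  isColSign_of_col_eq (A := Aᵀ) hε h

end Signs

section TropicalMutation

variable {ι : Type} [Fintype ι] [DecidableEq ι] {d : ι → ℤ} {B : Matrix ι ι ℤ}
  {σ : ℤ} {p : List ι} {l : ι}

lemma Cmat_append_of_isColSign (hb : Bpath B p l l = 0) (hσ : IsColSign σ (Cmat B p) l) :
    Cmat B (p ++ [l]) = Cmat B p * mutE σ l (Bpath B p) := by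
  ext i j
  rw [Cmat_append, Matrix.add_apply, colSel_mul_apply, mul_mutE_apply _ hb, mul_mutE_apply _ hb]
  have hσi := hσ.2.2 i
  simp only [matPos, Matrix.neg_apply]
  rcases hσ.1 with rfl | rfl
  · rw [max_eq_right (show -Cmat B p i l ≤ 0 by linarith)]
    split_ifs <;> simp
  · rw [max_eq_left (show 0 ≤ -Cmat B p i l by linarith)]
    split_ifs with hj
    · rw [hj, hb]
      ring
    · simp only [one_mul, neg_one_mul]
      linear_combination Cmat B p i l * max_zero_sub_eq_self (Bpath B p l j)

lemma Gmat_append_of_isColSign (hB : IsSkewSymmetrizer d B) (hσ : IsColSign σ (Cmat B p) l) :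
    Gmat B (p ++ [l]) = Gmat B p * mutF (-σ) l (Bpath B p) := by
  rw [Gmat_append]
  rcases hσ.1 with rfl | rfl
  · rw [colSel_matPos_of_nonneg fun i => by simpa using hσ.2.2 i, mul_colSel,
      ← Gmat_mul_Bpath hB, ← mul_colSel, ← Matrix.mul_sub, mutF_one_sub_colSel]
  · rw [colSel_matPos_of_nonpos fun i => by simpa using hσ.2.2 i, Matrix.mul_zero, sub_zero,
      neg_neg]

end TropicalMutation

section DualPair

variable {ι : Type} [Fintype ι] [DecidableEq ι]

lemma isUnit_apply_of_col_eq_zero {R : Type} [CommRing R] {A : Matrix ι ι R} (hA : IsUnit A.det)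
    {k l : ι} (h : ∀ i ≠ k, A i l = 0) : IsUnit (A k l) := by
  have hcol : A.updateCol l (A k l • Pi.single k 1) = A := by
    ext i j
    rw [updateCol_apply]
    split_ifs with hj
    · subst hj
      by_cases hi : i = k
      · simp [hi]
      · simp [hi, h i hi]
    · rfl
  have hdet := det_updateCol_smul A l (A k l) (Pi.single k 1)
  rw [hcol] at hdet
  exact isUnit_of_dvd_unit ⟨_, hdet⟩ hA

lemma isUnit_apply_of_row_eq_zero {R : Type} [CommRing R] {A : Matrix ι ι R} (hA : IsUnit A.det)
    {k l : ι} (h : ∀ j ≠ l, A k j = 0) : IsUnit (A k l) :=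
  isUnit_apply_of_col_eq_zero (A := Aᵀ) (by rwa [det_transpose]) h

def IsDualPair {R : Type} [CommRing R] (d : ι → R) (C G : Matrix ι ι R) : Prop :=
  Cᵀ * diagonal d * G = diagonal d

namespace IsDualPair

variable {R : Type} [CommRing R] {d : ι → R} {C G : Matrix ι ι R}

lemma sum_mul_mul (h : IsDualPair d C G) (i j : ι) :
    ∑ m, C m i * d m * G m j = diagonal d i j := by
  rw [← h, mul_apply]
  simp only [mul_diagonal, transpose_apply]

lemma map {S : Type} [CommRing S] (h : IsDualPair d C G) (f : R →+* S) :
    IsDualPair (fun i => f (d i)) (C.map f) (G.map f) := by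
  rw [IsDualPair, ← transpose_map, ← diagonal_map (map_zero f), ← Matrix.map_mul,
    ← Matrix.map_mul, h]

lemma symm {K : Type} [Field K] {d : ι → K} {C G : Matrix ι ι K} (h : IsDualPair d C G)
    (hd : ∀ i, d i ≠ 0) : IsDualPair d⁻¹ Gᵀ Cᵀ := by
  have hDD' : diagonal d * diagonal d⁻¹ = 1 := by
    rw [diagonal_mul_diagonal, ← diagonal_one]
    exact congrArg diagonal (funext fun i => mul_inv_cancel₀ (hd i))
  have hD'D : diagonal d⁻¹ * diagonal d = 1 := by
    rw [diagonal_mul_diagonal, ← diagonal_one]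
    exact congrArg diagonal (funext fun i => inv_mul_cancel₀ (hd i))
  have hinv : (diagonal d⁻¹ * Cᵀ * diagonal d) * G = 1 := by
    rw [Matrix.mul_assoc, Matrix.mul_assoc, ← Matrix.mul_assoc Cᵀ, h, hD'D]
  rw [IsDualPair, transpose_transpose]
  calc G * diagonal d⁻¹ * Cᵀ
        = G * (diagonal d⁻¹ * Cᵀ * diagonal d) * diagonal d⁻¹ := by
          simp only [Matrix.mul_assoc, hDD', Matrix.mul_one]
    _ = diagonal d⁻¹ := by rw [mul_eq_one_comm.mp hinv, Matrix.one_mul]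

lemma apply_mul_apply_of_col_eq_zero (h : IsDualPair d C G) {k l : ι} (hC : ∀ i ≠ k, C i l = 0)
    (j : ι) : C k l * d k * G k j = diagonal d l j := by
  rw [← h.sum_mul_mul, Finset.sum_eq_single k (fun m _ hm => by rw [hC m hm, zero_mul, zero_mul])
    (by simp)]

variable [IsDomain R]

lemma det_mul_det (h : IsDualPair d C G) (hd : ∀ i, d i ≠ 0) : C.det * G.det = 1 := by
  have hD : (diagonal d).det ≠ 0 := by
    rw [det_diagonal]
    exact Finset.prod_ne_zero_iff.mpr fun i _ => hd i
  have hdet := congrArg det h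
  rw [det_mul, det_mul, det_transpose] at hdet
  exact mul_right_cancel₀ hD (by linear_combination hdet)

lemma row_eq_zero_of_col_eq_zero (h : IsDualPair d C G) (hd : ∀ i, d i ≠ 0) {k l : ι}
    (hC : ∀ i ≠ k, C i l = 0) : ∀ j ≠ l, G k j = 0 := by
  have hkl := h.apply_mul_apply_of_col_eq_zero hC l
  rw [diagonal_apply_eq] at hkl
  intro j hj
  have hkj := h.apply_mul_apply_of_col_eq_zero hC j
  rw [diagonal_apply_ne _ (Ne.symm hj)] at hkj
  exact (mul_eq_zero.mp hkj).resolve_left (left_ne_zero_of_mul (hkl ▸ hd l))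

lemma col_eq_zero_of_row_eq_zero (h : IsDualPair d C G) (hd : ∀ i, d i ≠ 0) {k l : ι}
    (hG : ∀ j ≠ l, G k j = 0) : ∀ i ≠ k, C i l = 0 := by
  let f := algebraMap R (FractionRing R)
  have hf : Function.Injective f := IsFractionRing.injective R (FractionRing R)
  have hdf : ∀ i, f (d i) ≠ 0 := fun i => (map_ne_zero_iff f hf).mpr (hd i)
  have hK := ((h.map f).symm hdf).row_eq_zero_of_col_eq_zero (fun i => inv_ne_zero (hdf i))
    (k := l) (l := k) (fun j hj => by simp [hG j hj])
  intro i hi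
  exact hf (by simpa using hK i hi)

end IsDualPair

end DualPair

section ConcentratedMutation

variable {ι : Type} [Fintype ι] [DecidableEq ι] {R : Type} [CommRing R] [LinearOrder R]
  [IsOrderedRing R] {k l : ι} {ε : R}

lemma mutE_mul_mul_mutE_neg {B C b : Matrix ι ι R} (hε : ε * ε = 1) (hB : B k k = 0)
    (hb : b l l = 0) (hC : ∀ i, C i l = if i = k then ε else 0)
    (hBC : ∀ j, (B * C) k j = ε * b l j) :
    mutE (-ε) k B * C * mutE (-ε) l b = mutE ε k B * C * mutE ε l b := by
  have hXl : ∀ τ i, (mutE τ k B * C) i l = if i = k then -ε else 0 := by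
    intro τ i
    rw [mutE_mul_apply]
    split_ifs with hi <;> simp [hC, hi, hB]
  have hXk : ∀ j, (mutE ε k B * C) k j = (mutE (-ε) k B * C) k j + b l j := by
    intro j
    have hdiff : ∑ m, max (ε * B k m) 0 * C m j - ∑ m, max (-ε * B k m) 0 * C m j
        = ε * (B * C) k j := by
      rw [← Finset.sum_sub_distrib, mul_apply, Finset.mul_sum]
      refine Finset.sum_congr rfl fun m _ => ?_
      rw [neg_mul]
      linear_combination C m j * max_zero_sub_eq_self (ε * B k m)
    rw [hBC, ← mul_assoc, hε, one_mul] at hdiff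
    simp only [mutE_mul_apply, if_true]
    linear_combination hdiff
  ext i j
  rw [mul_mutE_apply _ hb, mul_mutE_apply _ hb, hXl, hXl]
  by_cases hj : j = l
  · simp only [hj, if_true]
  by_cases hi : i = k
  · simp only [hj, hi, if_false, if_true, hXk, neg_mul]
    linear_combination ε * max_zero_sub_eq_self (ε * b l j) + b l j * hε
  · simp only [hj, hi, if_false, mutE_mul_apply, zero_mul]

lemma mutF_mul_mul_mutF_neg {B G b : Matrix ι ι R} (hε : ε * ε = 1) (hB : B k k = 0)
    (hb : b l l = 0) (hG : ∀ j, G k j = if j = l then ε else 0)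
    (hGb : ∀ i, (G * b) i l = ε * B i k) :
    mutF (-ε) k B * G * mutF (-ε) l b = mutF ε k B * G * mutF ε l b := by
  apply transpose_injective
  simp only [transpose_mul, mutF_transpose, ← Matrix.mul_assoc]
  exact mutE_mul_mul_mutE_neg hε hb hB hG fun j => by
    rw [← transpose_mul, transpose_apply, hGb, transpose_apply]

end ConcentratedMutation

section SignCoherence

variable {ι : Type} [Fintype ι] [DecidableEq ι] {d : ι → ℤ} {B : Matrix ι ι ℤ}

lemma isColSign_iff_isRowSign_of_diagonal_mul_eq (hd : ∀ i, 0 < d i) {X A : Matrix ι ι ℤ}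
    (h : diagonal d * X = Aᵀ * diagonal d) (σ : ℤ) (k : ι) :
    IsColSign σ X k ↔ IsRowSign σ A k := by
  have hXA : ∀ i, d i * X i k = A k i * d k := fun i => by
    simpa [diagonal_mul, mul_diagonal] using congrFun (congrFun h i) k
  refine and_congr_right fun _ => and_congr (exists_congr fun i => ?_) (forall_congr' fun i => ?_)
  · have := hXA i
    constructor <;> intro hne h0 <;> simp [h0, (hd i).ne', (hd k).ne', hne] at this
  · have e : d i * (σ * X i k) = d k * (σ * A k i) := by linear_combination σ * hXA i
    rw [← mul_nonneg_iff_of_pos_left (hd i), e, mul_nonneg_iff_of_pos_left (hd k)]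

def InitialSeedMutation (B : Matrix ι ι ℤ) (p : List ι) (k : ι) : Prop :=
  ∃ ε : ℤ, IsRowSign ε (Gmat B p) k ∧
    Cmat (mutate B k) (k :: p) = mutE (-ε) k B * Cmat B p ∧
    Gmat (mutate B k) (k :: p) = mutF ε k B * Gmat B p

lemma initialSeedMutation_nil (hB : IsSkewSymmetrizer d B) (k : ι) :
    InitialSeedMutation B [] k := by
  have hone : IsColSign 1 (Cmat (mutate B k) []) k :=
    isColSign_of_col_eq (k := k) (Or.inl rfl) fun i => by simp [one_apply, eq_comm]
  have hBk : Bpath (mutate B k) [] k k = 0 := (hB.mutate k).apply_self k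
  refine ⟨1, isRowSign_of_row_eq (l := k) (Or.inl rfl) fun j => by simp [one_apply, eq_comm],
    ?_, ?_⟩
  · rw [← List.nil_append [k], Cmat_append_of_isColSign hBk hone]
    simp [mutE_mutate]
  · rw [← List.nil_append [k], Gmat_append_of_isColSign (hB.mutate k) hone]
    simp [mutF_mutate]

lemma diagonal_mul_Cmat_reverse (hB : IsSkewSymmetrizer d B) (p : List ι)
    (H : ∀ q : List ι, q.length < p.length →
      ∀ B', IsSkewSymmetrizer d B' → ∀ k, InitialSeedMutation B' q k) :
    diagonal d * Cmat (-Bpath B p) p.reverse = (Gmat B p)ᵀ * diagonal d ∧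
      diagonal d * Gmat (-Bpath B p) p.reverse = (Cmat B p)ᵀ * diagonal d := by
  induction p using List.reverseRecOn with
  | nil => simp
  | append_singleton q l ih =>
    obtain ⟨hCrev, hGrev⟩ := ih fun r hr => H r (by simp; omega)
    have hb := hB.Bpath q
    obtain ⟨ε, hε, hC', hG'⟩ := H q.reverse (by simp) _ hb.neg l
    have hσ : IsColSign ε (Cmat B q) l := by
      refine (isColSign_iff_isRowSign_of_diagonal_mul_eq hB.pos ?_ ε l).mpr hε
      simpa [transpose_mul] using (congrArg transpose hGrev).symm
    rw [List.reverse_append, List.reverse_singleton, List.singleton_append, Bpath_append,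
      ← mutate_neg, hC', hG', Cmat_append_of_isColSign (hb.apply_self l) hσ,
      Gmat_append_of_isColSign hB hσ, mutE_neg, mutF_neg, neg_neg, transpose_mul, transpose_mul,
      mutE_transpose, mutF_transpose]
    constructor
    · rw [← Matrix.mul_assoc, hb.diagonal_mul_mutE, Matrix.mul_assoc, hCrev, Matrix.mul_assoc]
    · rw [← Matrix.mul_assoc, ← hb.mutF_mul_diagonal, Matrix.mul_assoc, hGrev,
        Matrix.mul_assoc]

variable (hsc : SignCoherenceOfC) (hB : IsSkewSymmetrizer d B)
include hsc hB

lemma exists_isColSign_Cmat (p : List ι) (l : ι) : ∃ σ, IsColSign σ (Cmat B p) l :=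
  (hsc ι B (isSkewSymmetrizable_iff.mpr ⟨d, hB⟩) p).exists_isColSign l

lemma isDualPair_Cmat_Gmat (p : List ι) : IsDualPair d (Cmat B p) (Gmat B p) := by
  induction p using List.reverseRecOn with
  | nil => simp [IsDualPair]
  | append_singleton q l ih =>
    obtain ⟨σ, hσ⟩ := exists_isColSign_Cmat hsc hB q l
    have hb := hB.Bpath q
    rw [IsDualPair, Cmat_append_of_isColSign (hb.apply_self l) hσ,
      Gmat_append_of_isColSign hB hσ, transpose_mul, mutE_transpose]
    set b := Bpath B q
    calc mutF σ l bᵀ * (Cmat B q)ᵀ * diagonal d * (Gmat B q * mutF (-σ) l b)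
        = mutF σ l bᵀ * ((Cmat B q)ᵀ * diagonal d * Gmat B q) * mutF (-σ) l b := by
          simp only [Matrix.mul_assoc]
      _ = diagonal d := by
        rw [ih, hb.mutF_mul_diagonal, Matrix.mul_assoc, mutF_mul_self (hb.apply_self l),
          Matrix.mul_one]

lemma exists_isRowSign_Gmat (p : List ι)
    (H : ∀ q : List ι, q.length < p.length →
      ∀ B', IsSkewSymmetrizer d B' → ∀ k, InitialSeedMutation B' q k) (k : ι) :
    ∃ ε, IsRowSign ε (Gmat B p) k := by
  obtain ⟨σ, hσ⟩ := exists_isColSign_Cmat hsc (hB.Bpath p).neg p.reverse k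
  exact ⟨σ, (isColSign_iff_isRowSign_of_diagonal_mul_eq hB.pos
    (diagonal_mul_Cmat_reverse hB p H).1 σ k).mp hσ⟩

variable {p : List ι} {k l : ι}

lemma Gmat_row_and_Cmat_col_of_row_eq_zero {ε : ℤ} (hε : IsRowSign ε (Gmat B p) k)
    (hconc : ∀ j ≠ l, Gmat B p k j = 0) :
    (∀ j, Gmat B p k j = if j = l then ε else 0) ∧
      (∀ i, Cmat B p i l = if i = k then ε else 0) := by
  have hdual := isDualPair_Cmat_Gmat hsc hB p
  have hd : ∀ i, d i ≠ 0 := fun i => (hB.pos i).ne'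
  have hdet := hdual.det_mul_det hd
  have hGkl : Gmat B p k l = ε := eq_sign_of_isUnit hε.1
    (isUnit_apply_of_row_eq_zero (IsUnit.of_mul_eq_one_right _ hdet) hconc) (hε.2.2 l)
  have hcol := hdual.col_eq_zero_of_row_eq_zero hd hconc
  have hkl := hdual.apply_mul_apply_of_col_eq_zero hcol l
  rw [diagonal_apply_eq, hGkl] at hkl
  have hCkl : Cmat B p k l = ε := by
    refine eq_sign_of_isUnit hε.1 (isUnit_apply_of_col_eq_zero
      (IsUnit.of_mul_eq_one _ hdet) hcol) (pos_of_mul_pos_left ?_ (hB.pos k).le).le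
    linarith [hB.pos l]
  constructor
  · intro j
    split_ifs with hj
    · rw [hj, hGkl]
    · exact hconc j hj
  · intro i
    split_ifs with hi
    · rw [hi, hCkl]
    · exact hcol i hi

lemma initialSeedMutation_append_of_row_eq_zero (ih : InitialSeedMutation B p k)
    (hconc : ∀ j ≠ l, Gmat B p k j = 0) : InitialSeedMutation B (p ++ [l]) k := by
  obtain ⟨ε, hε, hC', hG'⟩ := ih
  obtain ⟨hGrow, hCcol⟩ := Gmat_row_and_Cmat_col_of_row_eq_zero hsc hB hε hconc
  have hε' : -ε = 1 ∨ -ε = -1 := by rcases hε.1 with rfl | rfl <;> simp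
  have hεε : ε * ε = 1 := by rcases hε.1 with rfl | rfl <;> rfl
  have hBk := hB.apply_self k
  have hb := (hB.Bpath p).apply_self l
  have hσ : IsColSign ε (Cmat B p) l := isColSign_of_col_eq hε.1 hCcol
  have hσ' : IsColSign (-ε) (Cmat (mutate B k) (k :: p)) l := by
    refine isColSign_of_col_eq (k := k) hε' fun i => ?_
    rw [hC', mutE_mul_apply]
    split_ifs with hi <;> simp [hCcol, hi, hBk]
  have hb' : Bpath (mutate B k) (k :: p) l l = 0 := by rwa [Bpath_mutate_cons]
  have hGB := Gmat_mul_Bpath hB p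
  refine ⟨-ε, isRowSign_of_row_eq (l := l) hε' fun j => ?_, ?_, ?_⟩
  · rw [Gmat_append_of_isColSign hB hσ, mul_mutF_apply]
    split_ifs with hj <;> simp [hGrow, hj, hb]
  · rw [← List.cons_append, Cmat_append_of_isColSign hb' hσ', Bpath_mutate_cons, hC',
      Cmat_append_of_isColSign hb hσ, neg_neg, ← Matrix.mul_assoc,
      mutE_mul_mul_mutE_neg hεε hBk hb hCcol fun j => ?_]
    rw [← hGB, mul_apply, Finset.sum_eq_single l (fun m _ hm => by simp [hGrow, hm]) (by simp),
      hGrow, if_pos rfl]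
  · rw [← List.cons_append, Gmat_append_of_isColSign (hB.mutate k) hσ', Bpath_mutate_cons, hG',
      Gmat_append_of_isColSign hB hσ, neg_neg, ← Matrix.mul_assoc,
      ← mutF_mul_mul_mutF_neg hεε hBk hb hGrow fun i => ?_]
    rw [hGB, mul_apply, Finset.sum_eq_single k (fun m _ hm => by simp [hCcol, hm]) (by simp),
      hCcol, if_pos rfl, mul_comm]

lemma initialSeedMutation_append_of_row_ne_zero (ih : InitialSeedMutation B p k)
    (hrow : ∃ ε₀, IsRowSign ε₀ (Gmat B (p ++ [l])) k)
    (hj : ∃ j ≠ l, Gmat B p k j ≠ 0) :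
    InitialSeedMutation B (p ++ [l]) k := by
  obtain ⟨ε, hε, hC', hG'⟩ := ih
  obtain ⟨ε₀, hε₀⟩ := hrow
  obtain ⟨j, hjl, hGkj⟩ := hj
  obtain ⟨σ, hσ⟩ := exists_isColSign_Cmat hsc hB p l
  obtain ⟨σ', hσ'⟩ := exists_isColSign_Cmat hsc (hB.mutate k) (k :: p) l
  have hG_next : Gmat B (p ++ [l]) k j = Gmat B p k j := by
    rw [Gmat_append_of_isColSign hB hσ, mul_mutF_apply, if_neg hjl]
  have hε₀ε : ε₀ = ε :=
    sign_eq_of_mul_nonneg hε₀.1 hε.1 hGkj (hG_next ▸ hε₀.2.2 j) (hε.2.2 j)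
  obtain ⟨i, hik, hCil⟩ : ∃ i ≠ k, Cmat B p i l ≠ 0 := by
    by_contra! hcol
    exact hGkj ((isDualPair_Cmat_Gmat hsc hB p).row_eq_zero_of_col_eq_zero
      (fun i => (hB.pos i).ne') hcol j hjl)
  have hC'il : Cmat (mutate B k) (k :: p) i l = Cmat B p i l := by
    rw [hC', mutE_mul_apply, if_neg hik]
  have hσσ' : σ' = σ :=
    sign_eq_of_mul_nonneg hσ'.1 hσ.1 hCil (hC'il ▸ hσ'.2.2 i) (hσ.2.2 i)
  subst hε₀ε hσσ'
  have hb := (hB.Bpath p).apply_self l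
  have hb' : Bpath (mutate B k) (k :: p) l l = 0 := by rwa [Bpath_mutate_cons]
  refine ⟨ε₀, hε₀, ?_, ?_⟩
  · rw [← List.cons_append, Cmat_append_of_isColSign hb' hσ', Bpath_mutate_cons, hC',
      Cmat_append_of_isColSign hb hσ, Matrix.mul_assoc]
  · rw [← List.cons_append, Gmat_append_of_isColSign (hB.mutate k) hσ', Bpath_mutate_cons, hG',
      Gmat_append_of_isColSign hB hσ, Matrix.mul_assoc]

end SignCoherence

theorem initialSeedMutation {ι : Type} [Fintype ι] [DecidableEq ι] (hsc : SignCoherenceOfC)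
    {d : ι → ℤ} {B : Matrix ι ι ℤ} (hB : IsSkewSymmetrizer d B) (p : List ι) (k : ι) :
    InitialSeedMutation B p k := by
  rcases List.eq_nil_or_concat' p with rfl | ⟨q, l, rfl⟩
  · exact initialSeedMutation_nil hB k
  have H : ∀ r : List ι, r.length < (q ++ [l]).length →
      ∀ B', IsSkewSymmetrizer d B' → ∀ k, InitialSeedMutation B' r k :=
    fun r _ B' hB' k' => initialSeedMutation hsc hB' r k'
  have ih := H q (by simp) B hB k
  by_cases hconc : ∀ j ≠ l, Gmat B q k j = 0
  · exact initialSeedMutation_append_of_row_eq_zero hsc hB ih hconc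
  · push Not at hconc
    exact initialSeedMutation_append_of_row_ne_zero hsc hB ih
      (exists_isRowSign_Gmat hsc hB _ H k) hconc
termination_by p.length

/-- the `k`-th row of `G^{B;t_0}_t` is sign-coherent with row sign `ε`, and the
reduced initial-seed mutation formulas for the `C`- and `G`-matrices hold. -/
theorem CG_initialSeedMutation_reduced (hsc : SignCoherenceOfC) {n : ℕ}
    (B : Matrix (Fin n) (Fin n) ℤ) (hB : IsSkewSymmetrizable B)
    (p : List (Fin n)) (k : Fin n) :
    ∃ ε : ℤ, IsRowSign ε (Gmat B p) k ∧
      Cmat (mutate B k) (k :: p) = (Jmat k + rowSel k (matPos ((-ε) • B))) * Cmat B p ∧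
      Gmat (mutate B k) (k :: p) = (Jmat k + colSel k (matPos (ε • B))) * Gmat B p := by
  obtain ⟨d, hd⟩ := isSkewSymmetrizable_iff.mp hB
  exact initialSeedMutation hsc hd p k
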